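/- Let A = cone{(3,0,3), (0,1,3), (0,−1,3), (−3,0,−2)} ⊆ ℝ³ (the set of all nonnegative combinations of these four vectors). For all real x₁, x₂ with 0 < |x₂| < x₁, the metric projection of the point x⁰ = (x₁, x₂, 0) onto A is P_A(x⁰) = (x₁/2, 0, x₁/2), and consequently the reflection is R_A(x⁰) = 2P_A(x⁰) − x⁰ = (0, −x₂, x₁). -/

import Mathlib

open RealInnerProductSpace

/-- The point of `ℝ³ = EuclideanSpace ℝ (Fin 3)` with coordinates `(a, b, c)`. -/
noncomputable def vec3 (a b c : ℝ) : EuclideanSpace ℝ (Fin 3) :=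
  (WithLp.equiv 2 (Fin 3 → ℝ)).symm ![a, b, c]

/-!
Writing `x⁰ = (x₁, x₂, 0)` and `p = (x₁/2, 0, x₁/2)`, the residual `x⁰ - p = (x₁/2, x₂, -x₁/2)`
is orthogonal to `p` and makes a nonpositive inner product with each of the four generators
(namely `0`, `x₂ - 3x₁/2`, `-x₂ - 3x₁/2` and `-x₁/2`), i.e. it lies in the polar cone of `A`.
Since `p = (x₁/6)·(3,0,3) ∈ A`, this is exactly the variational characterization of `P_A(x⁰)`.
-/

section Cone

variable {E ι : Type*} [NormedAddCommGroup E] [InnerProductSpace ℝ E] [Fintype ι]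

theorem inner_sum_smul_sub_le_zero {v : ι → E} {p z : E} (hp : ⟪p, z⟫ = 0)
    (hv : ∀ i, ⟪v i, z⟫ ≤ 0) {α : ι → ℝ} (hα : ∀ i, 0 ≤ α i) :
    ⟪∑ i, α i • v i - p, z⟫ ≤ 0 := by
  rw [inner_sub_left, hp, sub_zero, sum_inner]
  exact Finset.sum_nonpos fun i _ => by
    rw [real_inner_smul_left]
    exact mul_nonpos_of_nonneg_of_nonpos (hα i) (hv i)

end Cone

theorem vec3_apply_zero (a b c : ℝ) : vec3 a b c 0 = a := rfl

theorem vec3_apply_one (a b c : ℝ) : vec3 a b c 1 = b := rfl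

theorem vec3_apply_two (a b c : ℝ) : vec3 a b c 2 = c := rfl

theorem vec3_ext {x y : EuclideanSpace ℝ (Fin 3)} (h0 : x 0 = y 0) (h1 : x 1 = y 1)
    (h2 : x 2 = y 2) : x = y := by
  ext i
  fin_cases i <;> assumption

theorem vec3_sub (a b c a' b' c' : ℝ) :
    vec3 a b c - vec3 a' b' c' = vec3 (a - a') (b - b') (c - c') :=
  vec3_ext rfl rfl rfl

theorem smul_vec3 (r a b c : ℝ) : r • vec3 a b c = vec3 (r * a) (r * b) (r * c) :=
  vec3_ext rfl rfl rfl

theorem inner_vec3 (a b c a' b' c' : ℝ) :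
    ⟪vec3 a b c, vec3 a' b' c'⟫ = a * a' + b * b' + c * c' := by
  simp only [PiLp.inner_apply, Fin.sum_univ_three, vec3_apply_zero, vec3_apply_one,
    vec3_apply_two, RCLike.inner_apply, conj_trivial]
  ring

theorem projection_onto_concrete_cone_general
    (A : Set (EuclideanSpace ℝ (Fin 3)))
    (hA : A = {x : EuclideanSpace ℝ (Fin 3) | ∃ α : Fin 4 → ℝ, (∀ i, 0 ≤ α i) ∧
      x = ∑ i, α i •
        ![vec3 3 0 3, vec3 0 1 3, vec3 0 (-1) 3, vec3 (-3) 0 (-2)] i})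
    (x₁ x₂ : ℝ) (hx₁ : |x₂| < x₁) :
    vec3 (x₁ / 2) 0 (x₁ / 2) ∈ A ∧
    (∀ y ∈ A, ⟪y - vec3 (x₁ / 2) 0 (x₁ / 2), vec3 x₁ x₂ 0 - vec3 (x₁ / 2) 0 (x₁ / 2)⟫ ≤ 0) ∧
    (2 : ℝ) • vec3 (x₁ / 2) 0 (x₁ / 2) - vec3 x₁ x₂ 0 = vec3 0 (-x₂) x₁ := by
  obtain ⟨hx₂_lower, hx₂_upper⟩ := abs_lt.mp hx₁
  have hx₁_pos : 0 < x₁ := (abs_nonneg x₂).trans_lt hx₁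
  have hresidual : vec3 x₁ x₂ 0 - vec3 (x₁ / 2) 0 (x₁ / 2) = vec3 (x₁ / 2) x₂ (-(x₁ / 2)) := by
    rw [vec3_sub]; congr 1 <;> ring
  subst hA
  refine ⟨⟨![x₁ / 6, 0, 0, 0], ?_, ?_⟩, ?_, ?_⟩
  · intro i
    fin_cases i
    exacts [div_nonneg hx₁_pos.le (by norm_num), le_rfl, le_rfl, le_rfl]
  · simp only [Fin.sum_univ_four, Matrix.cons_val, zero_smul, add_zero, smul_vec3]
    congr 1 <;> ring
  · rintro y ⟨α, hα, rfl⟩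
    rw [hresidual]
    refine inner_sum_smul_sub_le_zero (by rw [inner_vec3]; ring) (fun i => ?_) hα
    fin_cases i <;>
      simp only [Fin.reduceFinMk, Fin.zero_eta, Fin.mk_one, Matrix.cons_val, inner_vec3] <;>
      linarith
  · rw [smul_vec3, vec3_sub]
    congr 1 <;> ring

/-- Let `A = cone{(3,0,3), (0,1,3), (0,−1,3), (−3,0,−2)} ⊆ ℝ³`. For all
reals `x₁, x₂` with `0 < |x₂| < x₁`, the metric projection of `x⁰ = (x₁, x₂, 0)` onto `A` is
`(x₁/2, 0, x₁/2)` (characterized by membership in `A` and the variational inequality), and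
consequently the reflection is `R_A(x⁰) = 2 P_A(x⁰) − x⁰ = (0, −x₂, x₁)`. -/
theorem projection_onto_concrete_cone
    (A : Set (EuclideanSpace ℝ (Fin 3)))
    (hA : A = {x : EuclideanSpace ℝ (Fin 3) | ∃ α : Fin 4 → ℝ, (∀ i, 0 ≤ α i) ∧
      x = ∑ i, α i •
        ![vec3 3 0 3, vec3 0 1 3, vec3 0 (-1) 3, vec3 (-3) 0 (-2)] i})
    (x₁ x₂ : ℝ) (hx₂ : 0 < |x₂|) (hx₁ : |x₂| < x₁) :
    vec3 (x₁ / 2) 0 (x₁ / 2) ∈ A ∧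
    (∀ y ∈ A, ⟪y - vec3 (x₁ / 2) 0 (x₁ / 2), vec3 x₁ x₂ 0 - vec3 (x₁ / 2) 0 (x₁ / 2)⟫ ≤ 0) ∧
    (2 : ℝ) • vec3 (x₁ / 2) 0 (x₁ / 2) - vec3 x₁ x₂ 0 = vec3 0 (-x₂) x₁ :=
  projection_onto_concrete_cone_general A hA x₁ x₂ hx₁
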